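/- Let Λ ⊂ ℝ be a nonempty compact set with maximum λ̄, and let R : Λ → ℝ be non-increasing and right-continuous with R(λ̄) ≤ α. Then the set S = {λ ∈ Λ : R(λ) ≤ α} is nonempty, its infimum λ̂ = inf S belongs to Λ, and R(λ̂) ≤ α. -/
import Mathlib


/-- CRC key deterministic lemma: for a non-increasing right-continuous risk `R` on a
nonempty compact set `Λ` with maximum `lbar` satisfying `R lbar ≤ α`, the set
`S = {l ∈ Λ | R l ≤ α}` is nonempty, its infimum belongs to `Λ`, and `R (inf S) ≤ α`. -/
theorem stmt0 (Λ : Set ℝ) (hne : Λ.Nonempty) (hcomp : IsCompact Λ)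
    (lbar : ℝ) (hlbar : IsGreatest Λ lbar)
    (R : ℝ → ℝ) (α : ℝ)
    (hmono : AntitoneOn R Λ)
    (hrc : ∀ l ∈ Λ, ContinuousWithinAt R (Λ ∩ Set.Ici l) l)
    (hend : R lbar ≤ α) :
    {l | l ∈ Λ ∧ R l ≤ α}.Nonempty ∧
      sInf {l | l ∈ Λ ∧ R l ≤ α} ∈ Λ ∧
      R (sInf {l | l ∈ Λ ∧ R l ≤ α}) ≤ α := by
  set S := {l | l ∈ Λ ∧ R l ≤ α} with hS
  have hSne : S.Nonempty := ⟨lbar, hlbar.1, hend⟩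
  have hSsub : S ⊆ Λ := fun x hx => hx.1
  have hΛbdd : BddBelow Λ := hcomp.bddBelow
  have hSbdd : BddBelow S := hΛbdd.mono hSsub
  have hΛclosed : IsClosed Λ := hcomp.isClosed
  have hinf_cl : sInf S ∈ closure S := csInf_mem_closure hSne hSbdd
  have hinfΛ : sInf S ∈ Λ := by
    have : closure S ⊆ Λ := hΛclosed.closure_subset_iff.mpr hSsub
    exact this hinf_cl
  refine ⟨hSne, hinfΛ, ?_⟩
  have hSsub2 : S ⊆ Λ ∩ Set.Ici (sInf S) := fun x hx =>
    ⟨hx.1, csInf_le hSbdd hx⟩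
  have hcwa : ContinuousWithinAt R S (sInf S) :=
    (hrc _ hinfΛ).mono hSsub2
  have himg : R (sInf S) ∈ closure (R '' S) :=
    hcwa.mem_closure_image hinf_cl
  have : closure (R '' S) ⊆ Set.Iic α := by
    refine (isClosed_Iic).closure_subset_iff.mpr ?_
    rintro _ ⟨x, hx, rfl⟩
    exact hx.2
  exact this himg
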